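/- Let R → S be a flat ring homomorphism and E a left R-module with a finite decreasing filtration F and a second finite decreasing filtration G. Then F and G are n-opposed on E (i.e., E = F^p E ⊕ G^{q+1} E for all p+q = n) if and only if the induced filtrations S ⊗_R F and S ⊗_R G are n-opposed on S ⊗_R E, provided S is faithfully flat over R. -/

import Mathlib

/-!
Faithfully flat base change `Submodule R M → Submodule A (A ⊗[R] M)` is an order embedding
(`Submodule.baseChange_inj`), and it preserves `⊥`, `⊤` and `⊔` for any `A`. Flatness makes it
preserve `⊓` as well, because `p ⊓ q` is the kernel of `M → M ⧸ p × M ⧸ q` and flat base change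
commutes with kernels. Hence it preserves and reflects complementarity of submodules, which is
all that `n`-opposedness asks of each pair `(F p, G (q + 1))`.
-/

open LinearMap

namespace LinearMap

theorem ker_baseChange_prod {R A M N P : Type*} [CommSemiring R] [Semiring A] [Algebra R A]
    [AddCommMonoid M] [Module R M] [AddCommMonoid N] [Module R N] [AddCommMonoid P] [Module R P]
    (f : M →ₗ[R] N) (g : M →ₗ[R] P) :
    ker ((f.prod g).baseChange A) = ker (f.baseChange A) ⊓ ker (g.baseChange A) := by
  have h : (f.baseChange A).prod (g.baseChange A) =
      (TensorProduct.prodRight R A A N P).toLinearMap ∘ₗ (f.prod g).baseChange A := by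
    ext <;> simp
  rw [← ker_prod, h, LinearEquiv.ker_comp]

theorem ker_baseChange {R A M N : Type*} [CommRing R] [CommRing A] [Algebra R A]
    [AddCommGroup M] [Module R M] [AddCommGroup N] [Module R N] [Module.Flat R A]
    (f : M →ₗ[R] N) : ker (f.baseChange A) = (ker f).baseChange A :=
  Module.Flat.ker_lTensor_eq A A f

end LinearMap

namespace Submodule

theorem baseChange_sup {R A M : Type*} [CommSemiring R] [Semiring A] [Algebra R A]
    [AddCommMonoid M] [Module R M] (p q : Submodule R M) :
    (p ⊔ q).baseChange A = p.baseChange A ⊔ q.baseChange A := by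
  rw [← span_eq p, ← span_eq q, ← span_union, baseChange_span, baseChange_span, baseChange_span,
    Set.image_union, span_union]

variable {R A M : Type*} [CommRing R] [CommRing A] [Algebra R A]
  [AddCommGroup M] [Module R M] (p q : Submodule R M)

theorem baseChange_inf [Module.Flat R A] :
    (p ⊓ q).baseChange A = p.baseChange A ⊓ q.baseChange A := by
  have h : p ⊓ q = ker (p.mkQ.prod q.mkQ) := by rw [ker_prod, ker_mkQ, ker_mkQ]
  rw [h, ← ker_baseChange, ker_baseChange_prod, ker_baseChange, ker_baseChange, ker_mkQ, ker_mkQ]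

theorem isCompl_baseChange_iff [Module.FaithfullyFlat R A] :
    IsCompl (p.baseChange A) (q.baseChange A) ↔ IsCompl p q := by
  simp only [isCompl_iff, disjoint_iff, codisjoint_iff, ← baseChange_inf, ← baseChange_sup,
    ← baseChange_bot A, ← baseChange_top A, baseChange_inj]

end Submodule

theorem opposed_iff_opposed_baseChange_of_faithfullyFlat_general
    (R S : Type) [CommRing R] [CommRing S] [Algebra R S] [Module.FaithfullyFlat R S]
    (E : Type) [AddCommGroup E] [Module R E]
    (F G : ℤ → Submodule R E)
    (n : ℤ) :
    (∀ p q : ℤ, p + q = n → IsCompl (F p) (G (q + 1))) ↔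
      (∀ p q : ℤ, p + q = n →
        IsCompl ((F p).baseChange S) ((G (q + 1)).baseChange S)) := by
  simp only [Submodule.isCompl_baseChange_iff]

/-- Let `R → S` be a faithfully flat ring map and `E` an `R`-module with two finite
decreasing filtrations `F` and `G`. Then `F` and `G` are `n`-opposed on `E`
(`E = F^p ⊕ G^{q+1}` for all `p + q = n`) if and only if the base-changed filtrations
`S ⊗_R F` and `S ⊗_R G` are `n`-opposed on `S ⊗_R E`. -/
theorem opposed_iff_opposed_baseChange_of_faithfullyFlat
    (R S : Type) [CommRing R] [CommRing S] [Algebra R S] [Module.FaithfullyFlat R S]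
    (E : Type) [AddCommGroup E] [Module R E]
    (F G : ℤ → Submodule R E) (hF : Antitone F) (hG : Antitone G)
    (hFtop : ∃ a : ℤ, F a = ⊤) (hFbot : ∃ b : ℤ, F b = ⊥)
    (hGtop : ∃ a : ℤ, G a = ⊤) (hGbot : ∃ b : ℤ, G b = ⊥)
    (n : ℤ) :
    (∀ p q : ℤ, p + q = n → IsCompl (F p) (G (q + 1))) ↔
      (∀ p q : ℤ, p + q = n →
        IsCompl ((F p).baseChange S) ((G (q + 1)).baseChange S)) :=
  opposed_iff_opposed_baseChange_of_faithfullyFlat_general R S E F G n
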